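/- Let m, n, l ≥ 1, let H₁ ∈ ℂ^{n×m} and H₂ ∈ ℂ^{l×n}, and let P₁, P₂ > 0. Let C₁ be a finite nonempty set of unit vectors in ℂ^m and C₂ a finite nonempty set of unit vectors in ℂ^n. Define F(a, b) = ab/(1 + a + b) for a, b ≥ 0. Let b₁ ∈ ℂ^m be a unit vector attaining γ₁⋆ = sup{ P₁‖H₁s‖² : ‖s‖ = 1 }, let g₁ ∈ ℂ^n be a unit vector attaining γ₂⋆ = sup{ P₂‖H₂w‖² : ‖w‖ = 1 }, and set γ̃₁ = max_{w∈C₁} P₁‖H₁w‖² and γ̃₂ = max_{w∈C₂} P₂‖H₂w‖². Then F(γ₁⋆, γ₂⋆) − F(γ̃₁, γ̃₂) ≤ 2P₁‖H₁‖_F² · min_{w∈C₁} d(b₁, w) + 2P₂‖H₂‖_F² · min_{w∈C₂} d(g₁, w), where d(u, v) = √(1 − |uᴴv|²). -/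

import Mathlib

/-- Euclidean norm of a complex vector. -/
noncomputable def cnorm {k : ℕ} (v : Fin k → ℂ) : ℝ :=
  Real.sqrt (∑ i, ‖v i‖ ^ 2)

/-- Squared Frobenius norm of a complex matrix. -/
noncomputable def frobSq {p q : ℕ} (A : Matrix (Fin p) (Fin q) ℂ) : ℝ :=
  ∑ i, ∑ j, ‖A i j‖ ^ 2

/-- Chordal distance between complex vectors: `d(u,v) = √(1 − |uᴴv|²)`. -/
noncomputable def cdist {k : ℕ} (u v : Fin k → ℂ) : ℝ :=
  Real.sqrt (1 - ‖dotProduct (star u) v‖ ^ 2)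

/-- End-to-end two-hop relay SNR with hop SNRs `a`, `b`. -/
noncomputable def snrF (a b : ℝ) : ℝ := a * b / (1 + a + b)

/-!
Each hop is treated separately. If `b` maximises `‖H s‖` over unit vectors and `w` is a unit
vector, write `w = ⟪b, w⟫ b + z`; then `‖z‖ = d(b, w)` and `‖H z‖ ≤ ‖H b‖ ‖z‖`, so
`‖H w‖ ≥ ‖H b‖ (|⟪b, w⟫| - d(b, w))`. Together with `|⟪b, w⟫|² + d(b, w)² = 1` this gives
`‖H b‖² - ‖H w‖² ≤ 2 ‖H b‖² d(b, w) ≤ 2 ‖H‖_F² d(b, w)`; taking for `w` the codeword nearest to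
`b` bounds the SNR loss of the hop. Finally `F` is nondecreasing and `1`-Lipschitz in each
argument on `[0, ∞)`, so the losses of the two hops add up.
-/

open scoped InnerProductSpace Matrix

theorem sq_sub_sq_le_of_mul_sub_le {a d s t : ℝ} (ha : 0 ≤ a) (hd : 0 ≤ d) (hs : 0 ≤ s)
    (had : a ^ 2 + d ^ 2 = 1) (ht : s * (a - d) ≤ t) : s ^ 2 - t ^ 2 ≤ 2 * s ^ 2 * d := by
  rcases le_or_gt d a with hda | had'
  · have h0 : 0 ≤ s * (a - d) := mul_nonneg hs (by linarith)
    have ha1 : a ≤ 1 := by nlinarith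
    nlinarith [mul_self_le_mul_self h0 ht,
      mul_nonneg (mul_nonneg (sq_nonneg s) hd) (sub_nonneg.mpr ha1)]
  · -- here `2 d² > a² + d² = 1`, so `2 s² d ≥ s²`
    have hd1 : 0 ≤ 2 * d - 1 := by nlinarith
    nlinarith [sq_nonneg t, mul_nonneg (sq_nonneg s) hd1]

section

variable {𝕜 E F : Type*} [RCLike 𝕜]

theorem LinearMap.norm_apply_le_of_unit_bound [NormedAddCommGroup E] [NormedSpace 𝕜 E]
    [NormedAddCommGroup F] [NormedSpace 𝕜 F] (T : E →ₗ[𝕜] F) {C : ℝ}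
    (hC : ∀ s, ‖s‖ = 1 → ‖T s‖ ≤ C) (x : E) : ‖T x‖ ≤ C * ‖x‖ := by
  rcases eq_or_ne x 0 with rfl | hx
  · simp
  have hs := hC _ (norm_smul_inv_norm (𝕜 := 𝕜) hx)
  rw [map_smul, norm_smul, norm_inv, RCLike.norm_ofReal, abs_norm,
    inv_mul_le_iff₀ (norm_pos_iff.mpr hx)] at hs
  linarith [mul_comm C ‖x‖]

theorem norm_sub_inner_smul_sq [NormedAddCommGroup E] [InnerProductSpace 𝕜 E] {b : E}
    (hb : ‖b‖ = 1) (w : E) :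
    ‖w - ⟪b, w⟫_𝕜 • b‖ ^ 2 = ‖w‖ ^ 2 - ‖⟪b, w⟫_𝕜‖ ^ 2 := by
  rw [@norm_sub_sq 𝕜, inner_smul_right, norm_smul, hb, ← inner_conj_symm, RCLike.conj_mul,
    ← RCLike.ofReal_pow, RCLike.ofReal_re, RCLike.norm_conj]
  ring

theorem sq_norm_map_sub_sq_norm_map_le [NormedAddCommGroup E] [InnerProductSpace 𝕜 E]
    [NormedAddCommGroup F] [NormedSpace 𝕜 F] (T : E →ₗ[𝕜] F) {b w : E}
    (hb : ‖b‖ = 1) (hw : ‖w‖ = 1) (hmax : ∀ x, ‖T x‖ ≤ ‖T b‖ * ‖x‖) :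
    ‖T b‖ ^ 2 - ‖T w‖ ^ 2 ≤ 2 * ‖T b‖ ^ 2 * √(1 - ‖⟪b, w⟫_𝕜‖ ^ 2) := by
  set c := ⟪b, w⟫_𝕜
  have hz_sq : ‖w - c • b‖ ^ 2 = 1 - ‖c‖ ^ 2 := by
    rw [norm_sub_inner_smul_sq hb, hw, one_pow]
  have hz : ‖w - c • b‖ = √(1 - ‖c‖ ^ 2) := by
    rw [← hz_sq, Real.sqrt_sq (norm_nonneg _)]
  have hlower : ‖T b‖ * (‖c‖ - ‖w - c • b‖) ≤ ‖T w‖ := by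
    have hsplit : T w = c • T b + T (w - c • b) := by simp
    have htri := norm_sub_norm_le (c • T b) (-T (w - c • b))
    rw [sub_neg_eq_add, ← hsplit, norm_neg, norm_smul] at htri
    nlinarith [hmax (w - c • b)]
  refine hz ▸ sq_sub_sq_le_of_mul_sub_le (norm_nonneg c) (norm_nonneg _) (norm_nonneg _) ?_ hlower
  rw [hz_sq]; ring

end

open WithLp (toLp)

theorem cnorm_eq_norm_toLp {k : ℕ} (v : Fin k → ℂ) : cnorm v = ‖toLp 2 v‖ := by
  rw [EuclideanSpace.norm_eq]; rfl

theorem cdist_eq {k : ℕ} (u v : Fin k → ℂ) :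
    cdist u v = √(1 - ‖⟪toLp 2 u, toLp 2 v⟫_ℂ‖ ^ 2) := by
  rw [EuclideanSpace.inner_toLp_toLp, dotProduct_comm]; rfl

section Frobenius

attribute [local instance] Matrix.frobeniusNormedAddCommGroup

theorem frobSq_eq_sq_norm {p q : ℕ} (A : Matrix (Fin p) (Fin q) ℂ) : frobSq A = ‖A‖ ^ 2 := by
  simp only [frobSq, Matrix.frobenius_norm_def, ← Real.rpow_natCast]
  rw [← Real.rpow_mul (by positivity)]
  norm_num

theorem cnorm_mulVec_sq_le {p q : ℕ} (A : Matrix (Fin p) (Fin q) ℂ) (x : Fin q → ℂ) :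
    cnorm (A *ᵥ x) ^ 2 ≤ frobSq A * cnorm x ^ 2 := by
  rw [frobSq_eq_sq_norm, cnorm_eq_norm_toLp, cnorm_eq_norm_toLp, ← mul_pow,
    ← Matrix.frobenius_norm_replicateCol (ι := Unit),
    ← Matrix.frobenius_norm_replicateCol (ι := Unit), Matrix.replicateCol_mulVec]
  gcongr
  exact Matrix.frobenius_norm_mul _ _

end Frobenius

theorem cnorm_mulVec_sq_sub_le {p q : ℕ} (H : Matrix (Fin p) (Fin q) ℂ) {b w : Fin q → ℂ}
    (hb : cnorm b = 1) (hw : cnorm w = 1)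
    (hmax : ∀ s, cnorm s = 1 → cnorm (H *ᵥ s) ≤ cnorm (H *ᵥ b)) :
    cnorm (H *ᵥ b) ^ 2 - cnorm (H *ᵥ w) ^ 2 ≤ 2 * frobSq H * cdist b w := by
  set T := Matrix.toLpLin 2 2 H
  have hT : ∀ x, cnorm (H *ᵥ x) = ‖T (toLp 2 x)‖ := fun x => cnorm_eq_norm_toLp _
  have hbound : ∀ s, ‖s‖ = 1 → ‖T s‖ ≤ ‖T (toLp 2 b)‖ := fun s hs => by
    simpa only [hT] using hmax s.ofLp (by rwa [cnorm_eq_norm_toLp])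
  have hloss := sq_norm_map_sub_sq_norm_map_le T (cnorm_eq_norm_toLp b ▸ hb)
    (cnorm_eq_norm_toLp w ▸ hw) (T.norm_apply_le_of_unit_bound hbound)
  rw [← hT, ← hT, ← cdist_eq] at hloss
  calc cnorm (H *ᵥ b) ^ 2 - cnorm (H *ᵥ w) ^ 2 ≤ 2 * cnorm (H *ᵥ b) ^ 2 * cdist b w := hloss
    _ ≤ 2 * frobSq H * cdist b w := by
      gcongr
      · exact Real.sqrt_nonneg _
      · simpa [hb] using cnorm_mulVec_sq_le H b

theorem hopSNR_sub_sup'_le {p q : ℕ} (H : Matrix (Fin p) (Fin q) ℂ) {P : ℝ} (hP : 0 < P)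
    {C : Finset (Fin q → ℂ)} (hC : C.Nonempty) (hCu : ∀ w ∈ C, cnorm w = 1)
    {b : Fin q → ℂ} (hbu : cnorm b = 1)
    (hb : ∀ s : Fin q → ℂ, cnorm s = 1 → P * cnorm (H *ᵥ s) ^ 2 ≤ P * cnorm (H *ᵥ b) ^ 2) :
    P * cnorm (H *ᵥ b) ^ 2 - C.sup' hC (fun w => P * cnorm (H *ᵥ w) ^ 2) ≤
      2 * P * frobSq H * C.inf' hC (fun w => cdist b w) := by
  obtain ⟨w, hwC, hw⟩ := C.exists_mem_eq_inf' hC (fun w => cdist b w)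
  have hmax : ∀ s, cnorm s = 1 → cnorm (H *ᵥ s) ≤ cnorm (H *ᵥ b) := fun s hs =>
    (sq_le_sq₀ (Real.sqrt_nonneg _) (Real.sqrt_nonneg _)).1 (le_of_mul_le_mul_left (hb s hs) hP)
  calc P * cnorm (H *ᵥ b) ^ 2 - C.sup' hC (fun w => P * cnorm (H *ᵥ w) ^ 2)
      ≤ P * (cnorm (H *ᵥ b) ^ 2 - cnorm (H *ᵥ w) ^ 2) := by
        rw [mul_sub]
        gcongr
        exact C.le_sup' (fun w => P * cnorm (H *ᵥ w) ^ 2) hwC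
    _ ≤ P * (2 * frobSq H * cdist b w) := by
        gcongr
        exact cnorm_mulVec_sq_sub_le H hbu (hCu w hwC) hmax
    _ = 2 * P * frobSq H * C.inf' hC (fun w => cdist b w) := by
        rw [hw]; ring

theorem snrF_comm (a b : ℝ) : snrF a b = snrF b a := by
  rw [snrF, snrF, mul_comm, add_right_comm]

theorem snrF_sub_snrF_le_left {a a' b : ℝ} (ha' : 0 ≤ a') (ha : a' ≤ a) (hb : 0 ≤ b) :
    snrF a b - snrF a' b ≤ a - a' := by
  have ha0 : 0 ≤ a := ha'.trans ha
  have h₁ : 1 + a + b ≠ 0 := by positivity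
  have h₂ : 1 + a' + b ≠ 0 := by positivity
  have hdiff : snrF a b - snrF a' b =
      (a - a') * (b * (1 + b) / ((1 + a + b) * (1 + a' + b))) := by
    unfold snrF
    field_simp
    ring
  rw [hdiff]
  refine mul_le_of_le_one_right (sub_nonneg.2 ha) ((div_le_one (by positivity)).2 ?_)
  nlinarith

theorem snrF_sub_snrF_le {a a' b b' : ℝ} (ha' : 0 ≤ a') (hb' : 0 ≤ b')
    (ha : a' ≤ a) (hb : b' ≤ b) :
    snrF a b - snrF a' b' ≤ (a - a') + (b - b') := by
  have hleft := snrF_sub_snrF_le_left ha' ha (hb'.trans hb)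
  have hright := snrF_sub_snrF_le_left hb' hb ha'
  rw [snrF_comm b a', snrF_comm b' a'] at hright
  linarith

theorem stmt17_general (m n l : ℕ)
    (H₁ : Matrix (Fin n) (Fin m) ℂ) (H₂ : Matrix (Fin l) (Fin n) ℂ)
    (P₁ P₂ : ℝ) (hP₁ : 0 < P₁) (hP₂ : 0 < P₂)
    (C₁ : Finset (Fin m → ℂ)) (hC₁ : C₁.Nonempty) (hC₁u : ∀ w ∈ C₁, cnorm w = 1)
    (C₂ : Finset (Fin n → ℂ)) (hC₂ : C₂.Nonempty) (hC₂u : ∀ w ∈ C₂, cnorm w = 1)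
    (b₁ : Fin m → ℂ) (hb₁u : cnorm b₁ = 1)
    (g₁ : Fin n → ℂ) (hg₁u : cnorm g₁ = 1)
    (hb₁ : ∀ s : Fin m → ℂ, cnorm s = 1 →
      P₁ * cnorm (H₁.mulVec s) ^ 2 ≤ P₁ * cnorm (H₁.mulVec b₁) ^ 2)
    (hg₁ : ∀ w : Fin n → ℂ, cnorm w = 1 →
      P₂ * cnorm (H₂.mulVec w) ^ 2 ≤ P₂ * cnorm (H₂.mulVec g₁) ^ 2) :
    snrF (P₁ * cnorm (H₁.mulVec b₁) ^ 2) (P₂ * cnorm (H₂.mulVec g₁) ^ 2) -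
      snrF (C₁.sup' hC₁ fun w => P₁ * cnorm (H₁.mulVec w) ^ 2)
        (C₂.sup' hC₂ fun w => P₂ * cnorm (H₂.mulVec w) ^ 2) ≤
    2 * P₁ * frobSq H₁ * (C₁.inf' hC₁ fun w => cdist b₁ w) +
      2 * P₂ * frobSq H₂ * (C₂.inf' hC₂ fun w => cdist g₁ w) := by
  have hsnr := snrF_sub_snrF_le
    (hC₁.elim fun w hw => C₁.le_sup'_of_le _ hw (by positivity))
    (hC₂.elim fun w hw => C₂.le_sup'_of_le _ hw (by positivity))
    (C₁.sup'_le hC₁ _ fun w hw => hb₁ w (hC₁u w hw))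
    (C₂.sup'_le hC₂ _ fun w hw => hg₁ w (hC₂u w hw))
  have hloss₁ := hopSNR_sub_sup'_le H₁ hP₁ hC₁ hC₁u hb₁u hb₁
  have hloss₂ := hopSNR_sub_sup'_le H₂ hP₂ hC₂ hC₂u hg₁u hg₁
  linarith

/-- SNR loss bound for the quantized two-hop relay scheme without the direct link:
`F(γ₁⋆, γ₂⋆) − F(γ̃₁, γ̃₂) ≤ 2P₁‖H₁‖_F² min_{w∈C₁} d(b₁,w) + 2P₂‖H₂‖_F² min_{w∈C₂} d(g₁,w)`,
where `b₁, g₁` are unit maximizers of the hop SNRs and `γ̃ᵢ` the best quantized hop SNRs. -/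
theorem stmt17 (m n l : ℕ) (hm : 1 ≤ m) (hn : 1 ≤ n) (hl : 1 ≤ l)
    (H₁ : Matrix (Fin n) (Fin m) ℂ) (H₂ : Matrix (Fin l) (Fin n) ℂ)
    (P₁ P₂ : ℝ) (hP₁ : 0 < P₁) (hP₂ : 0 < P₂)
    (C₁ : Finset (Fin m → ℂ)) (hC₁ : C₁.Nonempty) (hC₁u : ∀ w ∈ C₁, cnorm w = 1)
    (C₂ : Finset (Fin n → ℂ)) (hC₂ : C₂.Nonempty) (hC₂u : ∀ w ∈ C₂, cnorm w = 1)
    (b₁ : Fin m → ℂ) (hb₁u : cnorm b₁ = 1)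
    (g₁ : Fin n → ℂ) (hg₁u : cnorm g₁ = 1)
    (hb₁ : ∀ s : Fin m → ℂ, cnorm s = 1 →
      P₁ * cnorm (H₁.mulVec s) ^ 2 ≤ P₁ * cnorm (H₁.mulVec b₁) ^ 2)
    (hg₁ : ∀ w : Fin n → ℂ, cnorm w = 1 →
      P₂ * cnorm (H₂.mulVec w) ^ 2 ≤ P₂ * cnorm (H₂.mulVec g₁) ^ 2) :
    snrF (P₁ * cnorm (H₁.mulVec b₁) ^ 2) (P₂ * cnorm (H₂.mulVec g₁) ^ 2) -
      snrF (C₁.sup' hC₁ fun w => P₁ * cnorm (H₁.mulVec w) ^ 2)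
        (C₂.sup' hC₂ fun w => P₂ * cnorm (H₂.mulVec w) ^ 2) ≤
    2 * P₁ * frobSq H₁ * (C₁.inf' hC₁ fun w => cdist b₁ w) +
      2 * P₂ * frobSq H₂ * (C₂.inf' hC₂ fun w => cdist g₁ w) :=
  stmt17_general m n l H₁ H₂ P₁ P₂ hP₁ hP₂ C₁ hC₁ hC₁u C₂ hC₂ hC₂u b₁ hb₁u g₁ hg₁u hb₁ hg₁
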